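/- arXiv:2301.06411 — 3 statements merged into one kernel-verified Lean document; each statement's English description precedes it below -/
import Mathlib

section
/- Let Ω ⊂ ℂⁿ be a bounded domain with C²-smooth boundary and let δ₀ > 0 be such that every point at distance less than δ₀ from ∂Ω has a unique nearest boundary point π(·). Let γ : [0,1] → Ω be a piecewise C¹ curve with δ_Ω(γ(t)) < δ₀ for all t. Then ∫₀¹ |(γ'(t))_N| / δ_Ω(γ(t)) dt ≥ |log( δ_Ω(γ(1)) / δ_Ω(γ(0)) )|. -/
open Set Metric MeasureTheory Filter Bornology

noncomputable section


/-- Equip `ℂⁿ` with its Borel σ-algebra, so that `Measurable` means Borel measurable. -/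
instance {n : ℕ} : MeasurableSpace (EuclideanSpace ℂ (Fin n)) := borel _

instance {n : ℕ} : BorelSpace (EuclideanSpace ℂ (Fin n)) := ⟨rfl⟩

/-- The Euclidean distance from a point to the boundary of `Ω`. -/
def bdist {n : ℕ} (Ω : Set (EuclideanSpace ℂ (Fin n))) (z : EuclideanSpace ℂ (Fin n)) : ℝ :=
  Metric.infDist z (frontier Ω)

/-- A curve `γ : [a,b] → ℂⁿ` is piecewise `C¹` if it is continuous and there is a finite
partition of `[a,b]` on each closed subinterval of which `γ` is `C¹`. -/
def PiecewiseC1On {n : ℕ} (γ : ℝ → EuclideanSpace ℂ (Fin n)) (a b : ℝ) : Prop :=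
  ContinuousOn γ (Set.Icc a b) ∧
  ∃ (k : ℕ) (t : Fin (k + 1) → ℝ), StrictMono t ∧ t 0 = a ∧ t (Fin.last k) = b ∧
    ∀ i : Fin k, ContDiffOn ℝ 1 γ (Set.Icc (t i.castSucc) (t i.succ))

/-- The `F`-length `∫_a^b F(γ(t), γ'(t)) dt` of a curve. -/
def Flength {n : ℕ} (F : EuclideanSpace ℂ (Fin n) → EuclideanSpace ℂ (Fin n) → ℝ)
    (γ : ℝ → EuclideanSpace ℂ (Fin n)) (a b : ℝ) : ℝ :=
  ∫ t in a..b, F (γ t) (deriv γ t)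

/-- The Euclidean length `∫_a^b |γ'(t)| dt` of a curve. -/
def eLength {n : ℕ} (γ : ℝ → EuclideanSpace ℂ (Fin n)) (a b : ℝ) : ℝ :=
  ∫ t in a..b, ‖deriv γ t‖

/-- `γ` is a piecewise `C¹` curve in `Ω` from `x` to `y`, parametrized on `[0,1]`. -/
def IsCurveIn {n : ℕ} (Ω : Set (EuclideanSpace ℂ (Fin n))) (x y : EuclideanSpace ℂ (Fin n))
    (γ : ℝ → EuclideanSpace ℂ (Fin n)) : Prop :=
  PiecewiseC1On γ 0 1 ∧ (∀ t ∈ Set.Icc (0 : ℝ) 1, γ t ∈ Ω) ∧ γ 0 = x ∧ γ 1 = y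

/-- The pseudodistance associated to the Finsler-type integrand `F`. -/
def dF {n : ℕ} (Ω : Set (EuclideanSpace ℂ (Fin n)))
    (F : EuclideanSpace ℂ (Fin n) → EuclideanSpace ℂ (Fin n) → ℝ)
    (x y : EuclideanSpace ℂ (Fin n)) : ℝ :=
  sInf {L | ∃ γ, IsCurveIn Ω x y γ ∧ L = Flength F γ 0 1}

/-- `Ω` has `C²`-smooth boundary: `Ω = {r < 0}` for some function `r` of class `C²` on a
neighborhood of the closure of `Ω` whose differential does not vanish on `∂Ω`. -/
def HasC2Boundary {n : ℕ} (Ω : Set (EuclideanSpace ℂ (Fin n))) : Prop :=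
  ∃ (U : Set (EuclideanSpace ℂ (Fin n))) (r : EuclideanSpace ℂ (Fin n) → ℝ),
    IsOpen U ∧ closure Ω ⊆ U ∧ ContDiffOn ℝ 2 r U ∧ Ω = {x | r x < 0} ∧
    ∀ x ∈ frontier Ω, fderiv ℝ r x ≠ 0

/-- The orthogonal projection (w.r.t. the standard Hermitian inner product) of the vector `X`
onto the complex line `ℂ·(p − z)`; for `z ∈ Ω` near the boundary with nearest boundary point
`p = π(z)`, this line is `ℂ·n(π(z))`, the complex line spanned by the outer unit normal, and
this is the normal component `X_N` of `X`. -/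
def normalPart {n : ℕ} (p z X : EuclideanSpace ℂ (Fin n)) : EuclideanSpace ℂ (Fin n) :=
  (‖p - z‖ ^ 2 : ℝ)⁻¹ • ((inner ℂ (p - z) X : ℂ) • (p - z))

/-- `π` is a nearest-point projection to `∂Ω`, defined (and unique) at distance `< δ₀`
from `∂Ω`. -/
def IsNearestPointProj {n : ℕ} (Ω : Set (EuclideanSpace ℂ (Fin n))) (δ₀ : ℝ)
    (π : EuclideanSpace ℂ (Fin n) → EuclideanSpace ℂ (Fin n)) : Prop :=
  ∀ z, Metric.infDist z (frontier Ω) < δ₀ →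
    π z ∈ frontier Ω ∧ dist z (π z) = Metric.infDist z (frontier Ω) ∧
      ∀ q ∈ frontier Ω, dist z q = Metric.infDist z (frontier Ω) → q = π z

open Topology

/-! Write `δ = infDist · ∂Ω`. For every parameter `x`, `δ ∘ γ ≤ ‖γ - π (γ x)‖` with equality at `x`,
so `log δ ∘ γ` is touched from above by `log ‖γ - π (γ x)‖`. The derivative of the latter,
`Re ⟪γ x - π (γ x), γ'⟫ / δ²`, has modulus at most `|γ'_N| / δ`, since `γ x - π (γ x)` spans the
complex normal line. A Dini-derivative comparison turns this pointwise bound into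
`|Δ log δ| ≤ ∫ |γ'_N| / δ` on each `C¹` piece, and the pieces add up. -/

section NearestPoint

variable {α : Type*} [MetricSpace α] [ProperSpace α]

/-- Cluster points of `π w` as `w → z` are nearest points to `z`, and properness keeps `π w` in a
compact set. -/
theorem continuousAt_of_unique_nearest {F : Set α} (hF : IsClosed F) {π : α → α} {z : α}
    (hπ : ∀ᶠ w in 𝓝 z, π w ∈ F ∧ dist w (π w) = infDist w F)
    (huniq : ∀ q ∈ F, dist z q = infDist z F → q = π z) : ContinuousAt π z := by
  have hclose : ∀ ε > 0, ∀ᶠ w in 𝓝 z, π w ∈ F ∩ closedBall z (infDist z F + ε) := by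
    intro ε hε
    filter_upwards [hπ, ball_mem_nhds z (half_pos hε)] with w ⟨hwF, hwd⟩ hwz
    rw [mem_ball] at hwz
    refine ⟨hwF, mem_closedBall.2 ?_⟩
    calc dist (π w) z ≤ dist (π w) w + dist w z := dist_triangle _ _ _
      _ ≤ (infDist z F + dist w z) + dist w z := by
          rw [dist_comm, hwd]; gcongr; exact infDist_le_infDist_add_dist
      _ ≤ infDist z F + ε := by linarith
  refine ((isCompact_closedBall z _).inter_left hF).tendsto_nhds_of_unique_mapClusterPt
    (hclose 1 one_pos) fun q hq hcl => huniq q hq.1 ?_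
  refine le_antisymm (le_of_forall_pos_le_add fun ε hε => ?_) (infDist_le_dist_of_mem hq.1)
  have := isClosed_closedBall.mem_of_mapClusterPt hcl ((hclose ε hε).mono fun _ h => h.2)
  rwa [mem_closedBall, dist_comm] at this

end NearestPoint

section Majorant

variable {L h : ℝ → ℝ} {c d : ℝ}

theorem sub_le_integral_of_majorant (hcd : c ≤ d) (hL : ContinuousOn L (Icc c d))
    (hh : ContinuousOn h (Icc c d))
    (hmaj : ∀ x ∈ Ico c d, ∃ φ : ℝ → ℝ, ∃ D ≤ h x, HasDerivWithinAt φ D (Icc c d) x ∧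
      φ x = L x ∧ ∀ u ∈ Icc c d, L u ≤ φ u) :
    L d - L c ≤ ∫ u in c..d, h u := by
  set H : ℝ → ℝ := IccExtend hcd ((Icc c d).domRestrict h)
  have hH : Continuous H := hh.domRestrict.Icc_extend'
  have hHh : EqOn H h (Icc c d) := fun u hu => IccExtend_of_mem hcd _ hu
  have hB : ∀ x, HasDerivAt (fun s => L c + ∫ u in c..s, H u) (H x) x := fun x =>
    ((hH.integral_hasStrictDerivAt c x).hasDerivAt).const_add _
  have key := image_le_of_liminf_slope_right_le_deriv_boundary hL (by simp)
    (fun x _ => (hB x).continuousAt.continuousWithinAt) (fun x _ => (hB x).hasDerivWithinAt)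
    ?_ (right_mem_Icc.2 hcd)
  · rw [intervalIntegral.integral_congr (hHh.mono (uIcc_of_le hcd).subset)] at key
    linarith
  intro x hx r hr
  obtain ⟨φ, D, hDh, hφ, hφx, hLφ⟩ := hmaj x hx
  have hIoc : Ioc x d ∈ 𝓝[>] x := Ioc_mem_nhdsGT hx.2
  have hslope : Tendsto (slope φ x) (𝓝[>] x) (𝓝 D) :=
    (hasDerivWithinAt_iff_tendsto_slope' (lt_irrefl x)).1 <| hφ.mono_of_mem_nhdsWithin <|
      mem_of_superset hIoc (Ioc_subset_Icc_self.trans (Icc_subset_Icc_left hx.1))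
  rw [hHh (Ico_subset_Icc_self hx)] at hr
  refine Eventually.frequently ?_
  filter_upwards [hslope.eventually_lt_const (hDh.trans_lt hr), hIoc] with u hu hux
  refine lt_of_le_of_lt ?_ hu
  rw [slope_def_field, slope_def_field, hφx]
  gcongr
  · exact sub_nonneg.2 hux.1.le
  · exact hLφ u ⟨hx.1.trans hux.1.le, hux.2⟩

theorem abs_sub_le_integral_of_majorant (hcd : c ≤ d) (hL : ContinuousOn L (Icc c d))
    (hh : ContinuousOn h (Icc c d))
    (hmaj : ∀ x ∈ Icc c d, ∃ φ : ℝ → ℝ, ∃ D, |D| ≤ h x ∧ HasDerivWithinAt φ D (Icc c d) x ∧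
      φ x = L x ∧ ∀ u ∈ Icc c d, L u ≤ φ u) :
    |L d - L c| ≤ ∫ u in c..d, h u := by
  rw [abs_sub_le_iff]
  refine ⟨sub_le_integral_of_majorant hcd hL hh fun x hx => ?_, ?_⟩
  · obtain ⟨φ, D, hD, hφ⟩ := hmaj x (Ico_subset_Icc_self hx)
    exact ⟨φ, D, (le_abs_self D).trans hD, hφ⟩
  -- the reverse inequality is the forward one for `L (c + d - ·)`
  set σ : ℝ → ℝ := fun u => c + d - u
  have hσ : MapsTo σ (Icc c d) (Icc c d) := fun u hu => by
    simp only [σ, mem_Icc] at hu ⊢; constructor <;> linarith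
  have hσc : ContinuousOn σ (Icc c d) := by fun_prop
  have key := sub_le_integral_of_majorant (L := L ∘ σ) (h := h ∘ σ) hcd (hL.comp hσc hσ)
    (hh.comp hσc hσ) fun x hx => by
      obtain ⟨φ, D, hD, hφ, hφx, hLφ⟩ := hmaj (σ x) (hσ (Ico_subset_Icc_self hx))
      have hσ' : HasDerivWithinAt σ (-1) (Icc c d) x := by
        simpa using (hasDerivWithinAt_id x _).const_sub (c + d)
      refine ⟨φ ∘ σ, -D, (neg_le_abs D).trans hD, ?_, hφx, fun u hu => hLφ (σ u) (hσ hu)⟩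
      simpa using hφ.scomp x hσ' hσ
  simpa [σ, intervalIntegral.integral_comp_sub_left] using key

end Majorant

section IncrementBound

def IncrementLeIntegral (G g : ℝ → ℝ) (a b : ℝ) : Prop :=
  IntervalIntegrable g volume a b ∧ |G b - G a| ≤ ∫ x in a..b, g x

variable {G g : ℝ → ℝ}

theorem IncrementLeIntegral.refl (a : ℝ) : IncrementLeIntegral G g a a := by
  simp [IncrementLeIntegral]

theorem IncrementLeIntegral.trans {a b c : ℝ} (hab : IncrementLeIntegral G g a b)
    (hbc : IncrementLeIntegral G g b c) : IncrementLeIntegral G g a c := by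
  refine ⟨hab.1.trans hbc.1, ?_⟩
  rw [← intervalIntegral.integral_add_adjacent_intervals hab.1 hbc.1]
  calc |G c - G a| ≤ |G b - G a| + |G c - G b| := by
        rw [add_comm]; exact abs_sub_le _ _ _
    _ ≤ _ := add_le_add hab.2 hbc.2

end IncrementBound

theorem Fin.rel_zero_last_of_rel_succ {α : Type*} {r : α → α → Prop} (hrefl : ∀ a, r a a)
    (htrans : ∀ {a b c}, r a b → r b c → r a c) {k : ℕ} (t : Fin (k + 1) → α)
    (h : ∀ i : Fin k, r (t i.castSucc) (t i.succ)) : r (t 0) (t (Fin.last k)) :=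
  Fin.induction (motive := fun i => r (t 0) (t i)) (hrefl _) (fun i hi => htrans hi (h i)) _

section NormalPart

variable {n : ℕ}

theorem norm_normalPart (p z X : EuclideanSpace ℂ (Fin n)) :
    ‖normalPart p z X‖ = ‖inner ℂ (p - z) X‖ / ‖p - z‖ := by
  rcases eq_or_ne (p - z) 0 with h | h
  · simp [normalPart, h]
  · have : ‖p - z‖ ≠ 0 := norm_ne_zero_iff.2 h
    rw [normalPart, norm_smul, norm_smul, norm_inv, norm_pow, norm_norm]
    field_simp

theorem EuclideanSpace.real_inner_eq_re_inner (x y : EuclideanSpace ℂ (Fin n)) :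
    inner ℝ x y = (inner ℂ x y).re := by
  simp [PiLp.inner_apply, Complex.re_sum, Complex.inner]

theorem abs_real_inner_div_norm_le_norm_normalPart (p z X : EuclideanSpace ℂ (Fin n)) :
    |inner ℝ (z - p) X| / ‖z - p‖ ≤ ‖normalPart p z X‖ := by
  rw [EuclideanSpace.real_inner_eq_re_inner, norm_normalPart, ← neg_sub p z, inner_neg_left,
    Complex.neg_re, abs_neg, norm_neg]
  gcongr
  exact Complex.abs_re_le_norm _

theorem ContinuousOn.normalPart {s : Set ℝ} {p z X : ℝ → EuclideanSpace ℂ (Fin n)}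
    (hp : ContinuousOn p s) (hz : ContinuousOn z s) (hX : ContinuousOn X s)
    (hpz : ∀ t ∈ s, p t ≠ z t) :
    ContinuousOn (fun t => _root_.normalPart (p t) (z t) (X t)) s := by
  have hsq : ContinuousOn (fun t => ‖p t - z t‖ ^ 2) s := by fun_prop
  exact (hsq.inv₀ fun t ht => by simpa [sub_eq_zero] using hpz t ht).smul (by fun_prop)

end NormalPart

theorem hasDerivWithinAt_log_norm {E : Type*} [NormedAddCommGroup E] [InnerProductSpace ℝ E]
    {f : ℝ → E} {f' : E} {s : Set ℝ} {x : ℝ} (hf : HasDerivWithinAt f f' s x) (hx : f x ≠ 0) :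
    HasDerivWithinAt (fun t => Real.log ‖f t‖) (inner ℝ (f x) f' / ‖f x‖ ^ 2) s x := by
  have hlog : (fun t => Real.log (‖f t‖ ^ 2) / 2) = fun t => Real.log ‖f t‖ := by
    ext t; rw [Real.log_pow]; push_cast; ring
  have key := (hf.norm_sq.log (by positivity)).div_const 2
  rw [hlog] at key
  exact key.congr_deriv (by ring)

section NearestPointProj

variable {n : ℕ} {Ω : Set (EuclideanSpace ℂ (Fin n))} {δ₀ : ℝ}
  {π : EuclideanSpace ℂ (Fin n) → EuclideanSpace ℂ (Fin n)}

theorem IsNearestPointProj.continuousAt (hπ : IsNearestPointProj Ω δ₀ π)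
    {z : EuclideanSpace ℂ (Fin n)} (hz : infDist z (frontier Ω) < δ₀) : ContinuousAt π z := by
  have hnear : ∀ᶠ w in 𝓝 z, infDist w (frontier Ω) < δ₀ :=
    (isOpen_lt (continuous_infDist_pt _) continuous_const).mem_nhds hz
  exact continuousAt_of_unique_nearest isClosed_frontier
    (hnear.mono fun w hw => ⟨(hπ w hw).1, (hπ w hw).2.1⟩) (hπ z hz).2.2

theorem IsNearestPointProj.apply_ne (hΩ : IsOpen Ω) (hπ : IsNearestPointProj Ω δ₀ π)
    {z : EuclideanSpace ℂ (Fin n)} (hzΩ : z ∈ Ω) (hz : infDist z (frontier Ω) < δ₀) :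
    π z ≠ z := by
  intro h
  have hzF : z ∈ frontier Ω := h ▸ (hπ z hz).1
  exact (hΩ.inter_frontier_eq.subset ⟨hzΩ, hzF⟩ : z ∈ (∅ : Set _))

theorem IsNearestPointProj.infDist_pos (hΩ : IsOpen Ω) (hπ : IsNearestPointProj Ω δ₀ π)
    {z : EuclideanSpace ℂ (Fin n)} (hzΩ : z ∈ Ω) (hz : infDist z (frontier Ω) < δ₀) :
    0 < infDist z (frontier Ω) :=
  (hπ z hz).2.1 ▸ dist_pos.2 (hπ.apply_ne hΩ hzΩ hz).symm

theorem incrementLeIntegral_log_infDist (hΩ : IsOpen Ω) (hπ : IsNearestPointProj Ω δ₀ π)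
    {γ : ℝ → EuclideanSpace ℂ (Fin n)} {c d : ℝ} (hcd : c < d)
    (hγ : ContDiffOn ℝ 1 γ (Icc c d)) (hγΩ : ∀ t ∈ Icc c d, γ t ∈ Ω)
    (hγδ : ∀ t ∈ Icc c d, infDist (γ t) (frontier Ω) < δ₀) :
    IncrementLeIntegral (fun t => Real.log (infDist (γ t) (frontier Ω)))
      (fun t => ‖normalPart (π (γ t)) (γ t) (deriv γ t)‖ / infDist (γ t) (frontier Ω)) c d := by
  set F := frontier Ω
  set γ' := derivWithin γ (Icc c d)
  set h := fun t => ‖normalPart (π (γ t)) (γ t) (γ' t)‖ / infDist (γ t) F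
  have hγc := hγ.continuousOn
  have hpos : ∀ t ∈ Icc c d, 0 < infDist (γ t) F := fun t ht =>
    hπ.infDist_pos hΩ (hγΩ t ht) (hγδ t ht)
  have hδc : ContinuousOn (fun t => infDist (γ t) F) (Icc c d) :=
    (continuous_infDist_pt F).comp_continuousOn hγc
  have hπc : ContinuousOn (fun t => π (γ t)) (Icc c d) := fun t ht =>
    (hπ.continuousAt (hγδ t ht)).comp_continuousWithinAt (hγc t ht)
  have hh : ContinuousOn h (Icc c d) :=
    ((hπc.normalPart hγc (hγ.continuousOn_derivWithin (uniqueDiffOn_Icc hcd) le_rfl)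
      fun t ht => hπ.apply_ne hΩ (hγΩ t ht) (hγδ t ht)).norm.div hδc
      fun t ht => (hpos t ht).ne')
  have hderiv : EqOn h
      (fun t => ‖normalPart (π (γ t)) (γ t) (deriv γ t)‖ / infDist (γ t) F) (Ioo c d) :=
    fun t ht => by simp only [h, γ', derivWithin_of_mem_nhds (Icc_mem_nhds ht.1 ht.2)]
  refine ⟨(hh.intervalIntegrable_of_Icc hcd.le).congr_uIoo (uIoo_of_le hcd.le ▸ hderiv), ?_⟩
  rw [← intervalIntegral.integral_congr_Ioo_of_le hcd.le hderiv]
  refine abs_sub_le_integral_of_majorant hcd.le (hδc.log fun t ht => (hpos t ht).ne') hh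
    fun x hx => ?_
  obtain ⟨hpF, hpd, -⟩ := hπ (γ x) (hγδ x hx)
  set p := π (γ x)
  have hne : γ x - p ≠ 0 := sub_ne_zero.2 (hπ.apply_ne hΩ (hγΩ x hx) (hγδ x hx)).symm
  have hnorm : ‖γ x - p‖ = infDist (γ x) F := by rw [← dist_eq_norm, hpd]
  refine ⟨fun u => Real.log ‖γ u - p‖, _, ?_,
    hasDerivWithinAt_log_norm ((hγ.differentiableOn one_ne_zero x hx).hasDerivWithinAt.sub_const p)
      hne, by simp only [hnorm], fun u hu => ?_⟩
  · calc |inner ℝ (γ x - p) (γ' x) / ‖γ x - p‖ ^ 2|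
        = |inner ℝ (γ x - p) (γ' x)| / ‖γ x - p‖ / ‖γ x - p‖ := by
          rw [abs_div, abs_of_pos (pow_pos (norm_pos_iff.2 hne) 2), sq, div_div]
      _ ≤ ‖normalPart p (γ x) (γ' x)‖ / ‖γ x - p‖ := by
          gcongr; exact abs_real_inner_div_norm_le_norm_normalPart _ _ _
      _ = h x := by rw [hnorm]
  · exact Real.log_le_log (hpos u hu) ((infDist_le_dist_of_mem hpF).trans_eq (dist_eq_norm _ _))

end NearestPointProj

theorem statement6_general {n : ℕ} (Ω : Set (EuclideanSpace ℂ (Fin n)))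
    (hΩo : IsOpen Ω)
    (δ₀ : ℝ) (π : EuclideanSpace ℂ (Fin n) → EuclideanSpace ℂ (Fin n))
    (hπ : IsNearestPointProj Ω δ₀ π)
    (γ : ℝ → EuclideanSpace ℂ (Fin n)) (hγ : PiecewiseC1On γ 0 1)
    (hγΩ : ∀ t ∈ Set.Icc (0 : ℝ) 1, γ t ∈ Ω)
    (hγδ : ∀ t ∈ Set.Icc (0 : ℝ) 1, bdist Ω (γ t) < δ₀) :
    (∫ t in (0 : ℝ)..1,
        ‖normalPart (π (γ t)) (γ t) (deriv γ t)‖ / Metric.infDist (γ t) (frontier Ω)) ≥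
      |Real.log (bdist Ω (γ 1) / bdist Ω (γ 0))| := by
  obtain ⟨-, k, t, ht, ht0, htk, hC1⟩ := hγ
  have hsub : ∀ i : Fin k, Icc (t i.castSucc) (t i.succ) ⊆ Icc 0 1 := fun i =>
    Icc_subset_Icc (ht0 ▸ ht.monotone (Fin.zero_le _)) (htk ▸ ht.monotone (Fin.le_last _))
  have key := Fin.rel_zero_last_of_rel_succ IncrementLeIntegral.refl IncrementLeIntegral.trans t
    fun i => incrementLeIntegral_log_infDist hΩo hπ (ht Fin.castSucc_lt_succ) (hC1 i)
      (fun s hs => hγΩ s (hsub i hs)) (fun s hs => hγδ s (hsub i hs))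
  have hpos : ∀ s ∈ Icc (0 : ℝ) 1, bdist Ω (γ s) ≠ 0 := fun s hs =>
    (hπ.infDist_pos hΩo (hγΩ s hs) (hγδ s hs)).ne'
  rw [ht0, htk] at key
  rw [ge_iff_le, Real.log_div (hpos 1 (right_mem_Icc.2 zero_le_one))
    (hpos 0 (left_mem_Icc.2 zero_le_one))]
  exact key.2

/-- integrated estimate in the proof of Lemma 2.3. For a piecewise `C¹`
curve `γ` in `Ω` staying at distance `< δ₀` from the boundary,
`∫₀¹ |(γ'(t))_N| / δ(γ(t)) dt ≥ |log(δ(γ(1))/δ(γ(0)))|`. -/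
theorem statement6 {n : ℕ} (Ω : Set (EuclideanSpace ℂ (Fin n)))
    (hΩo : IsOpen Ω) (hΩc : IsConnected Ω) (hΩb : IsBounded Ω) (hbd : HasC2Boundary Ω)
    (δ₀ : ℝ) (hδ₀ : 0 < δ₀) (π : EuclideanSpace ℂ (Fin n) → EuclideanSpace ℂ (Fin n))
    (hπ : IsNearestPointProj Ω δ₀ π)
    (γ : ℝ → EuclideanSpace ℂ (Fin n)) (hγ : PiecewiseC1On γ 0 1)
    (hγΩ : ∀ t ∈ Set.Icc (0 : ℝ) 1, γ t ∈ Ω)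
    (hγδ : ∀ t ∈ Set.Icc (0 : ℝ) 1, bdist Ω (γ t) < δ₀) :
    (∫ t in (0 : ℝ)..1,
        ‖normalPart (π (γ t)) (γ t) (deriv γ t)‖ / Metric.infDist (γ t) (frontier Ω)) ≥
      |Real.log (bdist Ω (γ 1) / bdist Ω (γ 0))| :=
  statement6_general Ω hΩo δ₀ π hπ γ hγ hγΩ hγδ
end
end

section
/- Let Ω₁, Ω₂ ⊂ ℂⁿ be bounded domains and let d₁, d₂ be metrics on Ω₁, Ω₂ respectively such that for i = 1, 2 and some constant A > 0, all x, y in Ω_i satisfy (1/2)|log( δ_{Ω_i}(x) / δ_{Ω_i}(y) )| ≤ d_i(x,y) ≤ log( 1 + A|x−y| / √(δ_{Ω_i}(x)δ_{Ω_i}(y)) ). If f : Ω₁ → Ω₂ satisfies d₂(f(x), f(y)) = d₁(x,y) for all x, y ∈ Ω₁ (an isometry), then there exists a constant C ≥ 1 such that C^{−1}·δ_{Ω₁}(x) ≤ δ_{Ω₂}(f(x)) ≤ C·δ_{Ω₁}(x) for all x ∈ Ω₁. -/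
open Set Metric Filter Bornology

noncomputable section

/-- Abstract one-sided distortion estimate. -/
lemma aux_chain (A D a b s t dd : ℝ) (hA : 0 < A) (hD : 0 < D) (ha : 0 < a) (hb : 0 < b)
    (hs : 0 < s) (ht : 0 < t) (htD : t ≤ D) (hdd0 : 0 ≤ dd) (hdd : dd ≤ D)
    (h : (1 / 2) * |Real.log (a / s)| ≤ Real.log (1 + A * dd / Real.sqrt (b * t))) :
    t ≤ (Real.sqrt D + A * D / Real.sqrt b) ^ 2 / a * s := by
  set K := Real.sqrt D + A * D / Real.sqrt b with hKdef
  have hsb : 0 < Real.sqrt b := Real.sqrt_pos.mpr hb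
  have hst : 0 < Real.sqrt t := Real.sqrt_pos.mpr ht
  have hsD : 0 < Real.sqrt D := Real.sqrt_pos.mpr hD
  have hKpos : 0 < K := add_pos hsD (div_pos (mul_pos hA hD) hsb)
  -- Step 1: `1 + A*dd/√(b*t) ≤ K/√t`
  have h1 : 1 + A * dd / Real.sqrt (b * t) ≤ K / Real.sqrt t := by
    rw [Real.sqrt_mul hb.le]
    have e1 : (1 : ℝ) ≤ Real.sqrt D / Real.sqrt t := by
      rw [le_div_iff₀ hst, one_mul]
      exact Real.sqrt_le_sqrt htD
    have e2 : A * dd / (Real.sqrt b * Real.sqrt t) ≤ A * D / Real.sqrt b / Real.sqrt t := by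
      rw [div_div]
      exact (div_le_div_iff_of_pos_right (mul_pos hsb hst)).mpr (by nlinarith)
    have e3 : K / Real.sqrt t = Real.sqrt D / Real.sqrt t + A * D / Real.sqrt b / Real.sqrt t := by
      rw [hKdef, add_div]
    linarith
  -- Step 2: compare logs
  have hpos1 : (0 : ℝ) < 1 + A * dd / Real.sqrt (b * t) := by positivity
  have h2 : Real.log (Real.sqrt (a / s)) ≤ Real.log (K / Real.sqrt t) := by
    rw [Real.log_sqrt (by positivity)]
    have : Real.log (a / s) / 2 ≤ (1 / 2) * |Real.log (a / s)| := by
      rw [one_div, inv_mul_eq_div]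
      exact (div_le_div_iff_of_pos_right two_pos).mpr (le_abs_self _)
    exact this.trans (h.trans (Real.log_le_log hpos1 h1))
  -- Step 3: remove logs
  have h3 : Real.sqrt (a / s) ≤ K / Real.sqrt t :=
    (Real.log_le_log_iff (by positivity) (by positivity)).mp h2
  -- Step 4: multiply by `√t`
  have h4 : Real.sqrt (t * (a / s)) ≤ K := by
    rw [Real.sqrt_mul ht.le]
    calc Real.sqrt t * Real.sqrt (a / s) ≤ Real.sqrt t * (K / Real.sqrt t) :=
          mul_le_mul_of_nonneg_left h3 hst.le
      _ = K := by field_simp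
  -- Step 5: square
  have h5 : t * (a / s) ≤ K ^ 2 := by
    nlinarith [Real.sq_sqrt (show (0 : ℝ) ≤ t * (a / s) by positivity),
      Real.sqrt_nonneg (t * (a / s))]
  have h6 := mul_le_mul_of_nonneg_right h5 hs.le
  rw [div_mul_eq_mul_div, le_div_iff₀ ha]
  have : t * (a / s) * s = t * a := by field_simp
  rw [this] at h6
  linarith

/-- first step in the proof of Theorem 1.5. If `d₁, d₂` are metrics on
bounded domains `Ω₁, Ω₂ ⊂ ℂⁿ` satisfying the two-sided estimate
`(1/2)|log(δ(x)/δ(y))| ≤ dᵢ(x,y) ≤ log(1 + A|x−y|/√(δ(x)δ(y)))`, then any isometry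
`f : (Ω₁,d₁) → (Ω₂,d₂)` distorts the boundary distance by a bounded multiplicative
factor: `C⁻¹ δ_{Ω₁}(x) ≤ δ_{Ω₂}(f(x)) ≤ C δ_{Ω₁}(x)`. -/
theorem statement16 {n : ℕ} (Ω₁ Ω₂ : Set (EuclideanSpace ℂ (Fin n)))
    (hΩ₁o : IsOpen Ω₁) (hΩ₁c : IsConnected Ω₁) (hΩ₁b : IsBounded Ω₁)
    (hΩ₂o : IsOpen Ω₂) (hΩ₂c : IsConnected Ω₂) (hΩ₂b : IsBounded Ω₂)
    (d₁ d₂ : EuclideanSpace ℂ (Fin n) → EuclideanSpace ℂ (Fin n) → ℝ)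
    (A : ℝ) (hA : 0 < A)
    (h1low : ∀ x ∈ Ω₁, ∀ y ∈ Ω₁,
      (1 / 2) * |Real.log (bdist Ω₁ x / bdist Ω₁ y)| ≤ d₁ x y)
    (h1up : ∀ x ∈ Ω₁, ∀ y ∈ Ω₁,
      d₁ x y ≤ Real.log (1 + A * dist x y / Real.sqrt (bdist Ω₁ x * bdist Ω₁ y)))
    (h2low : ∀ x ∈ Ω₂, ∀ y ∈ Ω₂,
      (1 / 2) * |Real.log (bdist Ω₂ x / bdist Ω₂ y)| ≤ d₂ x y)
    (h2up : ∀ x ∈ Ω₂, ∀ y ∈ Ω₂,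
      d₂ x y ≤ Real.log (1 + A * dist x y / Real.sqrt (bdist Ω₂ x * bdist Ω₂ y)))
    (f : EuclideanSpace ℂ (Fin n) → EuclideanSpace ℂ (Fin n))
    (hf : MapsTo f Ω₁ Ω₂)
    (hiso : ∀ x ∈ Ω₁, ∀ y ∈ Ω₁, d₂ (f x) (f y) = d₁ x y) :
    ∃ C ≥ (1 : ℝ), ∀ x ∈ Ω₁,
      C⁻¹ * bdist Ω₁ x ≤ bdist Ω₂ (f x) ∧ bdist Ω₂ (f x) ≤ C * bdist Ω₁ x := by
  by_cases hnt : Nontrivial (EuclideanSpace ℂ (Fin n))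
  swap
  · -- degenerate case: the ambient space is a single point, so all boundary distances vanish
    haveI : Subsingleton (EuclideanSpace ℂ (Fin n)) := not_nontrivial_iff_subsingleton.mp hnt
    obtain ⟨y₁, hy₁⟩ := hΩ₁c.nonempty
    obtain ⟨y₂, hy₂⟩ := hΩ₂c.nonempty
    have e1 : Ω₁ = univ := eq_univ_of_forall fun z => (Subsingleton.elim y₁ z) ▸ hy₁
    have e2 : Ω₂ = univ := eq_univ_of_forall fun z => (Subsingleton.elim y₂ z) ▸ hy₂
    refine ⟨1, le_refl _, fun x _ => ?_⟩
    simp [bdist, e1, e2, frontier_univ, Metric.infDist_empty]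
  -- main case
  have hfr : ∀ (Ω : Set (EuclideanSpace ℂ (Fin n))), Ω.Nonempty → IsBounded Ω →
      (frontier Ω).Nonempty := by
    intro Ω hne hb
    rw [nonempty_iff_ne_empty]
    intro h
    rcases frontier_eq_empty_iff.mp h with h' | h'
    · exact hne.ne_empty h'
    · exact NormedSpace.unbounded_univ ℝ (EuclideanSpace ℂ (Fin n)) (h' ▸ hb)
  have hfr1 : (frontier Ω₁).Nonempty := hfr Ω₁ hΩ₁c.nonempty hΩ₁b
  have hfr2 : (frontier Ω₂).Nonempty := hfr Ω₂ hΩ₂c.nonempty hΩ₂b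
  -- positivity of the boundary distance
  have bpos : ∀ (Ω : Set (EuclideanSpace ℂ (Fin n))), IsOpen Ω → (frontier Ω).Nonempty →
      ∀ z ∈ Ω, 0 < bdist Ω z := by
    intro Ω ho hne z hz
    refine (isClosed_frontier.notMem_iff_infDist_pos hne).mp ?_
    intro hmem
    exact hmem.2 (by rwa [ho.interior_eq])
  -- a uniform bound
  obtain ⟨R, hR0, hRsub⟩ := (hΩ₁b.union hΩ₂b).subset_closedBall_lt 0 0
  set D := 2 * R with hDdef
  have hD : 0 < D := by positivity
  have hdistle : ∀ z w : EuclideanSpace ℂ (Fin n), z ∈ closedBall 0 R → w ∈ closedBall 0 R →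
      dist z w ≤ D := by
    intro z w hzb hwb
    rw [mem_closedBall] at hzb hwb
    calc dist z w ≤ dist z 0 + dist 0 w := dist_triangle _ _ _
      _ = dist z 0 + dist w 0 := by rw [dist_comm 0 w]
      _ ≤ R + R := add_le_add hzb hwb
      _ = D := by ring
  have hclos : ∀ (Ω : Set (EuclideanSpace ℂ (Fin n))), Ω ⊆ closedBall 0 R →
      frontier Ω ⊆ closedBall 0 R := by
    intro Ω hsub
    exact frontier_subset_closure.trans (closure_minimal hsub Metric.isClosed_closedBall)
  have hsub1 : Ω₁ ⊆ closedBall 0 R := (subset_union_left).trans hRsub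
  have hsub2 : Ω₂ ⊆ closedBall 0 R := (subset_union_right).trans hRsub
  have ble : ∀ (Ω : Set (EuclideanSpace ℂ (Fin n))), Ω ⊆ closedBall 0 R →
      (frontier Ω).Nonempty → ∀ z ∈ Ω, bdist Ω z ≤ D := by
    intro Ω hsub hne z hz
    obtain ⟨w, hw⟩ := hne
    calc bdist Ω z ≤ dist z w := Metric.infDist_le_dist_of_mem hw
      _ ≤ D := hdistle z w (hsub hz) (hclos Ω hsub hw)
  -- base point
  obtain ⟨x₀, hx₀⟩ := hΩ₁c.nonempty
  set a := bdist Ω₁ x₀ with hadef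
  set b := bdist Ω₂ (f x₀) with hbdef
  have ha : 0 < a := bpos Ω₁ hΩ₁o hfr1 x₀ hx₀
  have hb : 0 < b := bpos Ω₂ hΩ₂o hfr2 (f x₀) (hf hx₀)
  set K₂ := (Real.sqrt D + A * D / Real.sqrt b) ^ 2 / a with hK₂
  set K₁ := (Real.sqrt D + A * D / Real.sqrt a) ^ 2 / b with hK₁
  refine ⟨max (max K₁ K₂) 1, le_max_right _ _, fun x hx => ?_⟩
  set C := max (max K₁ K₂) 1 with hCdef
  have hC1 : (1 : ℝ) ≤ C := le_max_right _ _
  have hCpos : 0 < C := lt_of_lt_of_le one_pos hC1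
  set s := bdist Ω₁ x with hsdef
  set t := bdist Ω₂ (f x) with htdef
  have hs : 0 < s := bpos Ω₁ hΩ₁o hfr1 x hx
  have ht : 0 < t := bpos Ω₂ hΩ₂o hfr2 (f x) (hf hx)
  have hsD : s ≤ D := ble Ω₁ hsub1 hfr1 x hx
  have htD : t ≤ D := ble Ω₂ hsub2 hfr2 (f x) (hf hx)
  -- upper bound: t ≤ K₂ * s
  have hup : t ≤ K₂ * s := by
    refine aux_chain A D a b s t (dist (f x₀) (f x)) hA hD ha hb hs ht htD dist_nonneg
      (hdistle _ _ (hsub2 (hf hx₀)) (hsub2 (hf hx))) ?_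
    calc (1 / 2) * |Real.log (a / s)| ≤ d₁ x₀ x := h1low x₀ hx₀ x hx
      _ = d₂ (f x₀) (f x) := (hiso x₀ hx₀ x hx).symm
      _ ≤ Real.log (1 + A * dist (f x₀) (f x) / Real.sqrt (b * t)) :=
          h2up (f x₀) (hf hx₀) (f x) (hf hx)
  -- lower bound: s ≤ K₁ * t
  have hlow : s ≤ K₁ * t := by
    refine aux_chain A D b a t s (dist x₀ x) hA hD hb ha ht hs hsD dist_nonneg
      (hdistle _ _ (hsub1 hx₀) (hsub1 hx)) ?_
    calc (1 / 2) * |Real.log (b / t)| ≤ d₂ (f x₀) (f x) :=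
          h2low (f x₀) (hf hx₀) (f x) (hf hx)
      _ = d₁ x₀ x := hiso x₀ hx₀ x hx
      _ ≤ Real.log (1 + A * dist x₀ x / Real.sqrt (a * s)) := h1up x₀ hx₀ x hx
  constructor
  · rw [inv_mul_le_iff₀ hCpos]
    have hK₁C : K₁ ≤ C := (le_max_left _ _).trans (le_max_left _ _)
    calc s ≤ K₁ * t := hlow
      _ ≤ C * t := mul_le_mul_of_nonneg_right hK₁C ht.le
  · have hK₂C : K₂ ≤ C := (le_max_right _ _).trans (le_max_left _ _)
    calc t ≤ K₂ * s := hup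
      _ ≤ C * s := mul_le_mul_of_nonneg_right hK₂C hs.le
end
end

section
/- Let Ω₁, Ω₂ ⊂ ℂⁿ be bounded domains, m > 1, and let d₁, d₂ be metrics on Ω₁, Ω₂ respectively such that for i = 1, 2 there are constants A, C₀ > 0 with, for all x, y in Ω_i: d_i(x,y) ≤ log( 1 + A|x−y| / √(δ_{Ω_i}(x)δ_{Ω_i}(y)) ) and d_i(x,y) ≥ log( (|x−y|^m + max(δ_{Ω_i}(x), δ_{Ω_i}(y))) / √(δ_{Ω_i}(x)δ_{Ω_i}(y)) ) − C₀. If f : Ω₁ → Ω₂ satisfies d₂(f(x), f(y)) = d₁(x,y) for all x, y ∈ Ω₁, then there exists a constant C > 0 such that for all x, y ∈ Ω₁: |x−y|^m ≤ C( |f(x)−f(y)| + √(δ_{Ω₂}(f(x))δ_{Ω₂}(f(y))) ) and |f(x)−f(y)|^m ≤ C( |x−y| + √(δ_{Ω₁}(x)δ_{Ω₁}(y)) ). -/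
open Set Metric Filter Bornology

noncomputable section

private lemma st17_logcmp {P Q c : ℝ} (hP : 0 < P) (hQ : 0 < Q)
    (h : Real.log P - c ≤ Real.log Q) : P ≤ Real.exp c * Q := by
  have h2 : Real.log P ≤ Real.log (Real.exp c * Q) := by
    rw [Real.log_mul (Real.exp_ne_zero c) (ne_of_gt hQ), Real.log_exp]
    linarith
  exact (Real.log_le_log_iff hP (by positivity)).mp h2

private lemma st17_frontier_nonempty {n : ℕ} [Nontrivial (EuclideanSpace ℂ (Fin n))]
    {s : Set (EuclideanSpace ℂ (Fin n))} (hne : s.Nonempty) (hb : IsBounded s) :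
    (frontier s).Nonempty := by
  by_contra h
  rw [Set.not_nonempty_iff_eq_empty] at h
  rcases isClopen_iff.mp (isClopen_iff_frontier_eq_empty.mpr h) with h1 | h1
  · exact hne.ne_empty h1
  · obtain ⟨r, hr⟩ := hb.subset_closedBall 0
    obtain ⟨x, hx⟩ := NormedSpace.exists_lt_norm ℝ (EuclideanSpace ℂ (Fin n)) r
    have hx2 : x ∈ Metric.closedBall (0 : EuclideanSpace ℂ (Fin n)) r :=
      hr (h1 ▸ Set.mem_univ x)
    rw [Metric.mem_closedBall, dist_zero_right] at hx2
    linarith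

private lemma st17_bdist_pos {n : ℕ} {Ω : Set (EuclideanSpace ℂ (Fin n))}
    (ho : IsOpen Ω) (hne : (frontier Ω).Nonempty) {x : EuclideanSpace ℂ (Fin n)}
    (hx : x ∈ Ω) : 0 < bdist Ω x := by
  refine (isClosed_frontier.notMem_iff_infDist_pos hne).mp ?_
  rw [ho.frontier_eq]
  exact fun h => h.2 hx

set_option maxHeartbeats 2000000 in
/-- key two-sided inequality in the proof of Theorem 1.5. If `d₁, d₂`
are metrics on bounded domains `Ω₁, Ω₂ ⊂ ℂⁿ` satisfying
`dᵢ(x,y) ≤ log(1 + A|x−y|/√(δ(x)δ(y)))` and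
`dᵢ(x,y) ≥ log((|x−y|^m + max(δ(x),δ(y)))/√(δ(x)δ(y))) − C₀`, then any isometry
`f : (Ω₁,d₁) → (Ω₂,d₂)` satisfies
`|x−y|^m ≤ C(|f(x)−f(y)| + √(δ(f x)δ(f y)))` and
`|f(x)−f(y)|^m ≤ C(|x−y| + √(δ(x)δ(y)))`. -/
theorem statement17 {n : ℕ} (Ω₁ Ω₂ : Set (EuclideanSpace ℂ (Fin n)))
    (hΩ₁o : IsOpen Ω₁) (hΩ₁c : IsConnected Ω₁) (hΩ₁b : IsBounded Ω₁)
    (hΩ₂o : IsOpen Ω₂) (hΩ₂c : IsConnected Ω₂) (hΩ₂b : IsBounded Ω₂)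
    (m : ℝ) (hm : 1 < m)
    (d₁ d₂ : EuclideanSpace ℂ (Fin n) → EuclideanSpace ℂ (Fin n) → ℝ)
    (A C₀ : ℝ) (hA : 0 < A) (hC₀ : 0 < C₀)
    (h1up : ∀ x ∈ Ω₁, ∀ y ∈ Ω₁,
      d₁ x y ≤ Real.log (1 + A * dist x y / Real.sqrt (bdist Ω₁ x * bdist Ω₁ y)))
    (h1low : ∀ x ∈ Ω₁, ∀ y ∈ Ω₁,
      d₁ x y ≥ Real.log ((dist x y ^ m + max (bdist Ω₁ x) (bdist Ω₁ y)) /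
        Real.sqrt (bdist Ω₁ x * bdist Ω₁ y)) - C₀)
    (h2up : ∀ x ∈ Ω₂, ∀ y ∈ Ω₂,
      d₂ x y ≤ Real.log (1 + A * dist x y / Real.sqrt (bdist Ω₂ x * bdist Ω₂ y)))
    (h2low : ∀ x ∈ Ω₂, ∀ y ∈ Ω₂,
      d₂ x y ≥ Real.log ((dist x y ^ m + max (bdist Ω₂ x) (bdist Ω₂ y)) /
        Real.sqrt (bdist Ω₂ x * bdist Ω₂ y)) - C₀)
    (f : EuclideanSpace ℂ (Fin n) → EuclideanSpace ℂ (Fin n))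
    (hf : MapsTo f Ω₁ Ω₂)
    (hiso : ∀ x ∈ Ω₁, ∀ y ∈ Ω₁, d₂ (f x) (f y) = d₁ x y) :
    ∃ C > (0 : ℝ), ∀ x ∈ Ω₁, ∀ y ∈ Ω₁,
      dist x y ^ m ≤
        C * (dist (f x) (f y) + Real.sqrt (bdist Ω₂ (f x) * bdist Ω₂ (f y))) ∧
      dist (f x) (f y) ^ m ≤
        C * (dist x y + Real.sqrt (bdist Ω₁ x * bdist Ω₁ y)) := by
  have hm0 : m ≠ 0 := by positivity
  rcases subsingleton_or_nontrivial (EuclideanSpace ℂ (Fin n)) with hsub | hnt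
  · refine ⟨1, one_pos, fun x hx y hy => ?_⟩
    have hxy : x = y := Subsingleton.elim x y
    subst hxy
    rw [dist_self, dist_self, Real.zero_rpow hm0]
    constructor <;> positivity
  -- Main case: the space is nontrivial.
  obtain ⟨z₀, hz₀⟩ := hΩ₁c.nonempty
  have hw₀ : f z₀ ∈ Ω₂ := hf hz₀
  obtain ⟨r, hr⟩ := (hΩ₁b.union hΩ₂b).subset_closedBall 0
  set R : ℝ := max r 1 with hRdef
  have hR0 : (0 : ℝ) < R := lt_of_lt_of_le one_pos (le_max_right r 1)
  have hball : Ω₁ ∪ Ω₂ ⊆ Metric.closedBall 0 R :=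
    hr.trans (Metric.closedBall_subset_closedBall (le_max_left r 1))
  have hfr1 : (frontier Ω₁).Nonempty := st17_frontier_nonempty hΩ₁c.nonempty hΩ₁b
  have hfr2 : (frontier Ω₂).Nonempty := st17_frontier_nonempty hΩ₂c.nonempty hΩ₂b
  have hb1pos : ∀ x ∈ Ω₁, 0 < bdist Ω₁ x := fun x hx => st17_bdist_pos hΩ₁o hfr1 hx
  have hb2pos : ∀ y ∈ Ω₂, 0 < bdist Ω₂ y := fun y hy => st17_bdist_pos hΩ₂o hfr2 hy
  have hnorm : ∀ z, z ∈ Ω₁ ∪ Ω₂ → dist z (0 : EuclideanSpace ℂ (Fin n)) ≤ R :=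
    fun z hz => Metric.mem_closedBall.mp (hball hz)
  have hdist12 : ∀ z w, z ∈ Ω₁ ∪ Ω₂ → w ∈ Ω₁ ∪ Ω₂ → dist z w ≤ 2 * R := by
    intro z w hz hw
    calc dist z w ≤ dist z 0 + dist 0 w := dist_triangle _ _ _
      _ ≤ R + R := add_le_add (hnorm z hz) (by rw [dist_comm]; exact hnorm w hw)
      _ = 2 * R := by ring
  have hfrs1 : frontier Ω₁ ⊆ Metric.closedBall (0 : EuclideanSpace ℂ (Fin n)) R :=
    frontier_subset_closure.trans
      (closure_minimal (fun z hz => hball (Or.inl hz)) Metric.isClosed_closedBall)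
  have hfrs2 : frontier Ω₂ ⊆ Metric.closedBall (0 : EuclideanSpace ℂ (Fin n)) R :=
    frontier_subset_closure.trans
      (closure_minimal (fun z hz => hball (Or.inr hz)) Metric.isClosed_closedBall)
  have hbd1 : ∀ x ∈ Ω₁, bdist Ω₁ x ≤ 2 * R := by
    intro x hx
    calc bdist Ω₁ x ≤ dist x hfr1.some := Metric.infDist_le_dist_of_mem hfr1.some_mem
      _ ≤ dist x 0 + dist 0 hfr1.some := dist_triangle _ _ _
      _ ≤ R + R := add_le_add (hnorm x (Or.inl hx))
          (by rw [dist_comm]; exact Metric.mem_closedBall.mp (hfrs1 hfr1.some_mem))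
      _ = 2 * R := by ring
  have hbd2 : ∀ y ∈ Ω₂, bdist Ω₂ y ≤ 2 * R := by
    intro y hy
    calc bdist Ω₂ y ≤ dist y hfr2.some := Metric.infDist_le_dist_of_mem hfr2.some_mem
      _ ≤ dist y 0 + dist 0 hfr2.some := dist_triangle _ _ _
      _ ≤ R + R := add_le_add (hnorm y (Or.inr hy))
          (by rw [dist_comm]; exact Metric.mem_closedBall.mp (hfrs2 hfr2.some_mem))
      _ = 2 * R := by ring
  -- the cross inequalities, exponentiated
  set ec := Real.exp C₀ with hecdef
  have hec0 : 0 < ec := Real.exp_pos _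
  have cross12 : ∀ x ∈ Ω₁, ∀ y ∈ Ω₁,
      (dist x y ^ m + max (bdist Ω₁ x) (bdist Ω₁ y)) / Real.sqrt (bdist Ω₁ x * bdist Ω₁ y)
        ≤ ec * (1 + A * dist (f x) (f y) / Real.sqrt (bdist Ω₂ (f x) * bdist Ω₂ (f y))) := by
    intro x hx y hy
    have h1 := hb1pos x hx
    have h2 := hb1pos y hy
    have h3 := hb2pos _ (hf hx)
    have h4 := hb2pos _ (hf hy)
    have hPpos : 0 < (dist x y ^ m + max (bdist Ω₁ x) (bdist Ω₁ y)) /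
        Real.sqrt (bdist Ω₁ x * bdist Ω₁ y) := by
      apply div_pos
      · exact add_pos_of_nonneg_of_pos (Real.rpow_nonneg dist_nonneg m)
          (lt_max_iff.mpr (Or.inl h1))
      · exact Real.sqrt_pos.mpr (mul_pos h1 h2)
    have hQpos : 0 < 1 + A * dist (f x) (f y) /
        Real.sqrt (bdist Ω₂ (f x) * bdist Ω₂ (f y)) := by positivity
    refine st17_logcmp hPpos hQpos ?_
    calc Real.log ((dist x y ^ m + max (bdist Ω₁ x) (bdist Ω₁ y)) /
            Real.sqrt (bdist Ω₁ x * bdist Ω₁ y)) - C₀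
        ≤ d₁ x y := h1low x hx y hy
      _ = d₂ (f x) (f y) := (hiso x hx y hy).symm
      _ ≤ _ := h2up _ (hf hx) _ (hf hy)
  have cross21 : ∀ x ∈ Ω₁, ∀ y ∈ Ω₁,
      (dist (f x) (f y) ^ m + max (bdist Ω₂ (f x)) (bdist Ω₂ (f y))) /
          Real.sqrt (bdist Ω₂ (f x) * bdist Ω₂ (f y))
        ≤ ec * (1 + A * dist x y / Real.sqrt (bdist Ω₁ x * bdist Ω₁ y)) := by
    intro x hx y hy
    have h1 := hb1pos x hx
    have h2 := hb1pos y hy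
    have h3 := hb2pos _ (hf hx)
    have h4 := hb2pos _ (hf hy)
    have hPpos : 0 < (dist (f x) (f y) ^ m + max (bdist Ω₂ (f x)) (bdist Ω₂ (f y))) /
        Real.sqrt (bdist Ω₂ (f x) * bdist Ω₂ (f y)) := by
      apply div_pos
      · exact add_pos_of_nonneg_of_pos (Real.rpow_nonneg dist_nonneg m)
          (lt_max_iff.mpr (Or.inl h3))
      · exact Real.sqrt_pos.mpr (mul_pos h3 h4)
    have hQpos : 0 < 1 + A * dist x y / Real.sqrt (bdist Ω₁ x * bdist Ω₁ y) := by positivity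
    refine st17_logcmp hPpos hQpos ?_
    calc Real.log ((dist (f x) (f y) ^ m + max (bdist Ω₂ (f x)) (bdist Ω₂ (f y))) /
            Real.sqrt (bdist Ω₂ (f x) * bdist Ω₂ (f y))) - C₀
        ≤ d₂ (f x) (f y) := h2low _ (hf hx) _ (hf hy)
      _ = d₁ x y := hiso x hx y hy
      _ ≤ _ := h1up x hx y hy
  -- base point quantities
  set σ := bdist Ω₁ z₀ with hσdef
  set τ := bdist Ω₂ (f z₀) with hτdef
  have hσ : 0 < σ := hb1pos _ hz₀
  have hτ : 0 < τ := hb2pos _ hw₀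
  set sσ := Real.sqrt σ with hsσdef
  set sτ := Real.sqrt τ with hsτdef
  set s2 := Real.sqrt (2 * R) with hs2def
  have hsσ : 0 < sσ := Real.sqrt_pos.mpr hσ
  have hsτ : 0 < sτ := Real.sqrt_pos.mpr hτ
  have hs2 : 0 < s2 := Real.sqrt_pos.mpr (by positivity)
  -- comparability of boundary distances
  set B₁ : ℝ := ec * (s2 * sσ + A * (2 * R)) with hB₁def
  set B₂ : ℝ := ec * (s2 * sτ + A * (2 * R)) with hB₂def
  have hB₁ : 0 < B₁ := by positivity
  have hB₂ : 0 < B₂ := by positivity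
  set c₁ : ℝ := τ * σ / B₁ ^ 2 with hc₁def
  set c₂ : ℝ := B₂ ^ 2 / (σ * τ) with hc₂def
  have hc₁ : 0 < c₁ := by positivity
  have hc₂ : 0 < c₂ := by positivity
  have hcomp_low : ∀ x ∈ Ω₁, c₁ * bdist Ω₁ x ≤ bdist Ω₂ (f x) := by
    intro x hx
    set a := bdist Ω₂ (f x) with hadef
    set δ := bdist Ω₁ x with hδdef
    have ha : 0 < a := hb2pos _ (hf hx)
    have hδ : 0 < δ := hb1pos _ hx
    set sa := Real.sqrt a with hsadef
    set sδ := Real.sqrt δ with hsδdef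
    have hsa : 0 < sa := Real.sqrt_pos.mpr ha
    have hsδ : 0 < sδ := Real.sqrt_pos.mpr hδ
    have hsδ2 : sδ ≤ s2 := by
      rw [hsδdef, hs2def]; exact Real.sqrt_le_sqrt (hδdef ▸ hbd1 x hx)
    have hU : dist x z₀ ≤ 2 * R := hdist12 _ _ (Or.inl hx) (Or.inl hz₀)
    have hUnn : (0:ℝ) ≤ dist x z₀ := dist_nonneg
    have hττ : sτ * sτ = τ := by rw [hsτdef]; exact Real.mul_self_sqrt hτ.le
    have hσσ : sσ * sσ = σ := by rw [hsσdef]; exact Real.mul_self_sqrt hσ.le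
    have hδδ : sδ * sδ = δ := by rw [hsδdef]; exact Real.mul_self_sqrt hδ.le
    have haa : sa * sa = a := by rw [hsadef]; exact Real.mul_self_sqrt ha.le
    have h := cross21 x hx z₀ hz₀
    rw [← hadef, ← hδdef, ← hσdef, ← hτdef, Real.sqrt_mul ha.le, Real.sqrt_mul hδ.le,
      ← hsadef, ← hsτdef, ← hsδdef, ← hsσdef] at h
    have h1 : τ / (sa * sτ) ≤ ec * (1 + A * dist x z₀ / (sδ * sσ)) := by
      refine le_trans ?_ h
      apply div_le_div_of_nonneg_right ?_ (by positivity)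
      exact (le_max_right a τ).trans (le_add_of_nonneg_left (Real.rpow_nonneg dist_nonneg m))
    clear_value sa sδ sσ sτ s2 a δ σ τ B₁ c₁ ec
    clear h
    have h2 : sτ / sa ≤ ec * (1 + A * dist x z₀ / (sδ * sσ)) := by
      have e : τ / (sa * sτ) = sτ / sa := by
        rw [← hττ]; field_simp
      rw [e] at h1; exact h1
    have h3 : sτ * (sδ * sσ) ≤ ec * (sδ * sσ + A * dist x z₀) * sa := by
      have hx1 := mul_le_mul_of_nonneg_right h2
        (le_of_lt (show (0:ℝ) < sa * (sδ * sσ) by positivity))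
      have e1 : sτ / sa * (sa * (sδ * sσ)) = sτ * (sδ * sσ) := by field_simp
      have e2 : ec * (1 + A * dist x z₀ / (sδ * sσ)) * (sa * (sδ * sσ))
          = ec * (sδ * sσ + A * dist x z₀) * sa := by field_simp
      rw [e1, e2] at hx1
      exact hx1
    have h4 : sτ * (sδ * sσ) ≤ B₁ * sa := by
      refine h3.trans ?_
      rw [hB₁def]
      gcongr
    have h5 : τ * (δ * σ) ≤ B₁ ^ 2 * a := by
      have hsq := mul_self_le_mul_self (by positivity) h4
      calc τ * (δ * σ) = (sτ * (sδ * sσ)) * (sτ * (sδ * sσ)) := by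
            rw [← hττ, ← hδδ, ← hσσ]; ring
        _ ≤ (B₁ * sa) * (B₁ * sa) := hsq
        _ = B₁ ^ 2 * a := by rw [← haa]; ring
    rw [hc₁def, div_mul_eq_mul_div, div_le_iff₀ (by positivity)]
    linarith only [h5]
  have hcomp_up : ∀ x ∈ Ω₁, bdist Ω₂ (f x) ≤ c₂ * bdist Ω₁ x := by
    intro x hx
    set a := bdist Ω₂ (f x) with hadef
    set δ := bdist Ω₁ x with hδdef
    have ha : 0 < a := hb2pos _ (hf hx)
    have hδ : 0 < δ := hb1pos _ hx
    set sa := Real.sqrt a with hsadef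
    set sδ := Real.sqrt δ with hsδdef
    have hsa : 0 < sa := Real.sqrt_pos.mpr ha
    have hsδ : 0 < sδ := Real.sqrt_pos.mpr hδ
    have hsa2 : sa ≤ s2 := by
      rw [hsadef, hs2def]; exact Real.sqrt_le_sqrt (hadef ▸ hbd2 _ (hf hx))
    have hV : dist (f x) (f z₀) ≤ 2 * R := hdist12 _ _ (Or.inr (hf hx)) (Or.inr hw₀)
    have hVnn : (0:ℝ) ≤ dist (f x) (f z₀) := dist_nonneg
    have hττ : sτ * sτ = τ := by rw [hsτdef]; exact Real.mul_self_sqrt hτ.le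
    have hσσ : sσ * sσ = σ := by rw [hsσdef]; exact Real.mul_self_sqrt hσ.le
    have hδδ : sδ * sδ = δ := by rw [hsδdef]; exact Real.mul_self_sqrt hδ.le
    have haa : sa * sa = a := by rw [hsadef]; exact Real.mul_self_sqrt ha.le
    have h := cross12 x hx z₀ hz₀
    rw [← hadef, ← hδdef, ← hσdef, ← hτdef, Real.sqrt_mul ha.le, Real.sqrt_mul hδ.le,
      ← hsadef, ← hsτdef, ← hsδdef, ← hsσdef] at h
    have h1 : σ / (sδ * sσ) ≤ ec * (1 + A * dist (f x) (f z₀) / (sa * sτ)) := by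
      refine le_trans ?_ h
      apply div_le_div_of_nonneg_right ?_ (by positivity)
      exact (le_max_right δ σ).trans (le_add_of_nonneg_left (Real.rpow_nonneg dist_nonneg m))
    clear_value sa sδ sσ sτ s2 a δ σ τ B₂ c₂ ec
    clear h
    have h2 : sσ / sδ ≤ ec * (1 + A * dist (f x) (f z₀) / (sa * sτ)) := by
      have e : σ / (sδ * sσ) = sσ / sδ := by
        rw [← hσσ]; field_simp
      rw [e] at h1; exact h1
    have h3 : sσ * (sa * sτ) ≤ ec * (sa * sτ + A * dist (f x) (f z₀)) * sδ := by
      have hx1 := mul_le_mul_of_nonneg_right h2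
        (le_of_lt (show (0:ℝ) < sδ * (sa * sτ) by positivity))
      have e1 : sσ / sδ * (sδ * (sa * sτ)) = sσ * (sa * sτ) := by field_simp
      have e2 : ec * (1 + A * dist (f x) (f z₀) / (sa * sτ)) * (sδ * (sa * sτ))
          = ec * (sa * sτ + A * dist (f x) (f z₀)) * sδ := by field_simp
      rw [e1, e2] at hx1
      exact hx1
    have h4 : sσ * (sa * sτ) ≤ B₂ * sδ := by
      refine h3.trans ?_
      rw [hB₂def]
      gcongr
    have h5 : σ * (a * τ) ≤ B₂ ^ 2 * δ := by
      have hsq := mul_self_le_mul_self (by positivity) h4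
      calc σ * (a * τ) = (sσ * (sa * sτ)) * (sσ * (sa * sτ)) := by
            rw [← hσσ, ← haa, ← hττ]; ring
        _ ≤ (B₂ * sδ) * (B₂ * sδ) := hsq
        _ = B₂ ^ 2 * δ := by rw [← hδδ]; ring
    rw [hc₂def, div_mul_eq_mul_div, le_div_iff₀ (by positivity)]
    linarith only [h5]
  -- final constant
  refine ⟨ec * (1 + A) / c₁ + ec * (1 + A) * c₂, by positivity, fun x hx y hy => ?_⟩
  have h1 := hb1pos x hx
  have h2 := hb1pos y hy
  have h3 := hb2pos _ (hf hx)
  have h4 := hb2pos _ (hf hy)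
  set s := Real.sqrt (bdist Ω₁ x * bdist Ω₁ y) with hsdef
  set t := Real.sqrt (bdist Ω₂ (f x) * bdist Ω₂ (f y)) with htdef
  have hspos : 0 < s := Real.sqrt_pos.mpr (mul_pos h1 h2)
  have htpos : 0 < t := Real.sqrt_pos.mpr (mul_pos h3 h4)
  set u := dist x y with hudef
  set v := dist (f x) (f y) with hvdef
  have hu0 : (0:ℝ) ≤ u := hudef ▸ dist_nonneg
  have hv0 : (0:ℝ) ≤ v := hvdef ▸ dist_nonneg
  have hst : c₁ * s ≤ t := by
    have hax := hcomp_low x hx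
    have hay := hcomp_low y hy
    have hprod : c₁ ^ 2 * (bdist Ω₁ x * bdist Ω₁ y)
        ≤ bdist Ω₂ (f x) * bdist Ω₂ (f y) := by
      have hq := mul_le_mul hax hay (by positivity) (le_trans (by positivity) hax)
      linarith only [hq]
    calc c₁ * s = Real.sqrt (c₁ ^ 2 * (bdist Ω₁ x * bdist Ω₁ y)) := by
          rw [hsdef, Real.sqrt_mul (sq_nonneg c₁), Real.sqrt_sq hc₁.le]
      _ ≤ t := by rw [htdef]; exact Real.sqrt_le_sqrt hprod
  have hts : t ≤ c₂ * s := by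
    have hax := hcomp_up x hx
    have hay := hcomp_up y hy
    have hprod : bdist Ω₂ (f x) * bdist Ω₂ (f y)
        ≤ c₂ ^ 2 * (bdist Ω₁ x * bdist Ω₁ y) := by
      have hq := mul_le_mul hax hay h4.le (le_trans h3.le hax)
      linarith only [hq]
    calc t ≤ Real.sqrt (c₂ ^ 2 * (bdist Ω₁ x * bdist Ω₁ y)) := by
          rw [htdef]; exact Real.sqrt_le_sqrt hprod
      _ = c₂ * s := by rw [hsdef, Real.sqrt_mul (sq_nonneg c₂), Real.sqrt_sq hc₂.le]
  have hcross12' := cross12 x hx y hy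
  have hcross21' := cross21 x hx y hy
  rw [← hsdef, ← htdef, ← hudef, ← hvdef] at hcross12' hcross21'
  clear_value s t u v c₁ c₂ ec
  constructor
  · -- first inequality
    have key : u ^ m ≤ ec * (1 + A * v / t) * s := by
      have hh := (div_le_iff₀ hspos).mp hcross12'
      have hmax : (0:ℝ) ≤ max (bdist Ω₁ x) (bdist Ω₁ y) := le_trans h1.le (le_max_left _ _)
      linarith only [hh, hmax]
    have key2 : ec * (1 + A * v / t) * s ≤ ec * (1 + A * v / t) * (t / c₁) := by
      have hs' : s ≤ t / c₁ := (le_div_iff₀ hc₁).mpr (by linarith only [hst])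
      have hnn : (0:ℝ) ≤ ec * (1 + A * v / t) := by positivity
      exact mul_le_mul_of_nonneg_left hs' hnn
    have key3 : ec * (1 + A * v / t) * (t / c₁) = ec / c₁ * (t + A * v) := by
      field_simp
      try ring
    have key4 : ec / c₁ * (t + A * v) ≤ ec * (1 + A) / c₁ * (v + t) := by
      have base : t + A * v ≤ (1 + A) * (v + t) := by
        have hAt : (0:ℝ) ≤ A * t := mul_nonneg hA.le htpos.le
        have hAv : (0:ℝ) ≤ A * v := mul_nonneg hA.le hv0
        linarith only [hAt, hv0]
      have hq := mul_le_mul_of_nonneg_left base (le_of_lt (div_pos hec0 hc₁))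
      calc ec / c₁ * (t + A * v) ≤ ec / c₁ * ((1 + A) * (v + t)) := hq
        _ = ec * (1 + A) / c₁ * (v + t) := by ring
    have key5 : ec * (1 + A) / c₁ * (v + t)
        ≤ (ec * (1 + A) / c₁ + ec * (1 + A) * c₂) * (v + t) := by
      apply mul_le_mul_of_nonneg_right _ (by positivity)
      have hpos : (0:ℝ) ≤ ec * (1 + A) * c₂ := by positivity
      linarith only [hpos]
    calc u ^ m ≤ ec * (1 + A * v / t) * s := key
      _ ≤ ec * (1 + A * v / t) * (t / c₁) := key2
      _ = ec / c₁ * (t + A * v) := key3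
      _ ≤ ec * (1 + A) / c₁ * (v + t) := key4
      _ ≤ _ := key5
  · -- second inequality
    have key : v ^ m ≤ ec * (1 + A * u / s) * t := by
      have hh := (div_le_iff₀ htpos).mp hcross21'
      have hmax : (0:ℝ) ≤ max (bdist Ω₂ (f x)) (bdist Ω₂ (f y)) :=
        le_trans h3.le (le_max_left _ _)
      linarith only [hh, hmax]
    have key2 : ec * (1 + A * u / s) * t ≤ ec * (1 + A * u / s) * (c₂ * s) := by
      have hnn : (0:ℝ) ≤ ec * (1 + A * u / s) := by positivity
      exact mul_le_mul_of_nonneg_left hts hnn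
    have key3 : ec * (1 + A * u / s) * (c₂ * s) = ec * c₂ * (s + A * u) := by
      field_simp
      try ring
    have key4 : ec * c₂ * (s + A * u) ≤ ec * (1 + A) * c₂ * (u + s) := by
      have base : s + A * u ≤ (1 + A) * (u + s) := by
        have hAs : (0:ℝ) ≤ A * s := mul_nonneg hA.le hspos.le
        have hAu : (0:ℝ) ≤ A * u := mul_nonneg hA.le hu0
        linarith only [hAs, hu0]
      have hq := mul_le_mul_of_nonneg_left base (by positivity : (0:ℝ) ≤ ec * c₂)
      calc ec * c₂ * (s + A * u) ≤ ec * c₂ * ((1 + A) * (u + s)) := hq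
        _ = ec * (1 + A) * c₂ * (u + s) := by ring
    have key5 : ec * (1 + A) * c₂ * (u + s)
        ≤ (ec * (1 + A) / c₁ + ec * (1 + A) * c₂) * (u + s) := by
      apply mul_le_mul_of_nonneg_right _ (by positivity)
      have hpos : (0:ℝ) ≤ ec * (1 + A) / c₁ := by positivity
      linarith only [hpos]
    calc v ^ m ≤ ec * (1 + A * u / s) * t := key
      _ ≤ ec * (1 + A * u / s) * (c₂ * s) := key2
      _ = ec * c₂ * (s + A * u) := key3
      _ ≤ ec * (1 + A) * c₂ * (u + s) := key4
      _ ≤ _ := key5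
end
end
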